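/- arXiv:1901.04096 — 8 statements merged into one kernel-verified Lean document; each statement's English description precedes it below -/
import Mathlib

section
/- The symbolic recurrence C(B'−1, p) = (−1)^p/(p+1): for every natural number p, letting P(X) := ∏_{j=1}^{p} (X − j) ∈ ℚ[X], one has ∑_{k=0}^{p} (coeff of X^k in P) · B'_k = (−1)^p · p! / (p+1). -/
open Polynomial Finset

/-- The umbral linear functional `X^k ↦ bernoulli' k`. -/
noncomputable def umbL : ℚ[X] →ₗ[ℚ] ℚ :=
  Polynomial.lsum fun k => LinearMap.toSpanSingleton ℚ ℚ (bernoulli' k)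

lemma umbL_monomial (n : ℕ) (a : ℚ) : umbL (monomial n a) = a * bernoulli' n := by
  simp [umbL, Polynomial.sum_monomial_index, LinearMap.toSpanSingleton_apply, smul_eq_mul]

lemma umbL_X_pow (n : ℕ) : umbL (X ^ n) = bernoulli' n := by
  rw [← monomial_one_right_eq_X_pow, umbL_monomial, one_mul]

lemma umbL_comp_X_add_one (f : ℚ[X]) :
    umbL (f.comp (X + 1)) = umbL f + f.derivative.eval 1 := by
  induction f using Polynomial.induction_on' with
  | add p q hp hq => simp only [add_comp, map_add, derivative_add, eval_add, hp, hq]; ring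
  | monomial n a =>
    rw [monomial_comp, ← smul_eq_C_mul, map_smul, add_pow]
    simp only [one_pow, mul_one, map_sum]
    have : ∀ k ∈ range (n + 1), umbL (X ^ k * (n.choose k : ℚ[X]))
        = (n.choose k : ℚ) * bernoulli' k := by
      intro k _
      rw [mul_comm, ← C_eq_natCast, ← smul_eq_C_mul, map_smul, umbL_X_pow, smul_eq_mul]
    rw [Finset.sum_congr rfl this, Finset.sum_range_succ, sum_bernoulli', Nat.choose_self,
      Nat.cast_one, one_mul, umbL_monomial, derivative_monomial]
    simp [eval_monomial, smul_eq_mul]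
    ring

open Polynomial in
/-- The symbolic recurrence `C(B'-1, p) = (-1)^p/(p+1)` for the original
Bernoulli numbers (`B'_1 = +1/2`): with `P(X) := ∏_{j=1}^{p} (X - j)`,
`∑_{k=0}^{p} (coeff of X^k in P) · B'_k = (-1)^p · p! / (p+1)`. -/
theorem bernoulli'_binomial_recurrence (p : ℕ) :
    ∑ k ∈ Finset.range (p + 1),
        ((∏ j ∈ Finset.Icc 1 p, (X - C (j : ℚ))).coeff k) * bernoulli' k
      = (-1 : ℚ) ^ p * (Nat.factorial p : ℚ) / (p + 1) := by
  -- reindex the product over `range`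
  have hreidx : ∀ q : ℕ, ∏ j ∈ Finset.Icc 1 q, (X - C (j : ℚ))
      = ∏ i ∈ range q, (X - C ((i : ℚ) + 1)) := by
    intro q
    rw [← Finset.Ico_add_one_right_eq_Icc, Finset.prod_Ico_eq_prod_range]
    simp [add_comm, Nat.cast_add]
  set Q : ℕ → ℚ[X] := fun q => ∏ i ∈ range q, (X - C ((i : ℚ) + 1)) with hQ
  have hQmonic : ∀ q, (Q q).Monic := fun q =>
    monic_prod_of_monic _ _ fun i _ => monic_X_sub_C _
  have hQdeg : ∀ q, (Q q).natDegree = q := by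
    intro q
    rw [hQ]
    rw [Polynomial.natDegree_prod_of_monic _ _ (fun i _ => monic_X_sub_C _)]
    simp only [natDegree_X_sub_C]
    simp
  -- the sum is `umbL (Q p)`
  have hsum : ∑ k ∈ Finset.range (p + 1),
      ((∏ j ∈ Finset.Icc 1 p, (X - C (j : ℚ))).coeff k) * bernoulli' k = umbL (Q p) := by
    rw [hreidx p]
    have := Polynomial.sum_over_range (p := Q p)
      (f := fun n r => r * bernoulli' n) (fun n => by simp)
    rw [hQdeg p] at this
    rw [← this]
    simp [umbL, Polynomial.lsum_apply, LinearMap.toSpanSingleton_apply, smul_eq_mul]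
  rw [hsum]
  -- key identity: (p+1) * umbL (Q p) = (-1)^p * p!
  have hcomp : (Q (p + 1)).comp (X + 1) = X * Q p := by
    rw [hQ, Polynomial.prod_comp]
    have : ∀ i ∈ range (p + 1), (X - C ((i : ℚ) + 1)).comp (X + 1) = X - C (i : ℚ) := by
      intro i _
      simp [sub_comp]
    rw [Finset.prod_congr rfl this, Finset.prod_range_succ']
    simp [mul_comm, Nat.cast_add]
  have hsplit : Q (p + 1) = (X - C 1) * ∏ i ∈ range p, (X - C ((i : ℚ) + 2)) := by
    show (∏ i ∈ range (p + 1), (X - C ((i : ℚ) + 1))) = _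
    rw [Finset.prod_range_succ']
    simp only [Nat.cast_zero, zero_add, Nat.cast_add, Nat.cast_one]
    rw [mul_comm]
    congr 1
    apply Finset.prod_congr rfl
    intro i _
    rw [sub_right_inj]
    norm_cast
  have hderiv : (Q (p + 1)).derivative.eval 1 = (-1 : ℚ) ^ p * (Nat.factorial p : ℚ) := by
    rw [hsplit, derivative_mul, eval_add, eval_mul, eval_mul]
    simp only [derivative_sub, derivative_X, derivative_C, sub_zero, eval_one, eval_sub,
      eval_X, eval_C, sub_self, zero_mul, mul_zero, add_zero, one_mul]
    rw [eval_prod]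
    have : ∀ i ∈ range p, ((X : ℚ[X]) - C ((i : ℚ) + 2)).eval 1 = -((i : ℚ) + 1) := by
      intro i _; simp; ring
    rw [Finset.prod_congr rfl this]
    have hfac : ∏ x ∈ Finset.range p, ((x : ℚ) + 1) = (p.factorial : ℚ) := by
      have h := Finset.prod_range_add_one_eq_factorial p
      exact_mod_cast congrArg (fun n : ℕ => (n : ℚ)) h
    calc ∏ x ∈ Finset.range p, -((x : ℚ) + 1)
        = ∏ x ∈ Finset.range p, (-1 : ℚ) * ((x : ℚ) + 1) :=
          Finset.prod_congr rfl fun x _ => by ring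
      _ = (-1) ^ p * (p.factorial : ℚ) := by
          rw [Finset.prod_mul_distrib, Finset.prod_const, Finset.card_range, hfac]
  have hsub : (Q (p + 1)).comp (X + 1) - Q (p + 1) = C ((p : ℚ) + 1) * Q p := by
    rw [hcomp]
    have : Q (p + 1) = (X - C ((p : ℚ) + 1)) * Q p := by
      show (∏ i ∈ range (p + 1), (X - C ((i : ℚ) + 1))) = _
      rw [Finset.prod_range_succ, mul_comm]
    rw [this]
    ring
  have hkey : ((p : ℚ) + 1) * umbL (Q p) = (-1 : ℚ) ^ p * (Nat.factorial p : ℚ) := by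
    have h1 := umbL_comp_X_add_one (Q (p + 1))
    have h2 : umbL ((Q (p + 1)).comp (X + 1)) - umbL (Q (p + 1))
        = ((p : ℚ) + 1) * umbL (Q p) := by
      rw [← map_sub, hsub, ← smul_eq_C_mul, map_smul, smul_eq_mul]
    rw [← h2, h1, hderiv]
    ring
  have hne : ((p : ℚ) + 1) ≠ 0 := by positivity
  field_simp
  rw [mul_comm] at hkey
  linarith [hkey]
end

section
/- Blissard's binomial identity C(B, p) = (−1)^p/(p+1): for every natural number p, letting P(X) := ∏_{j=0}^{p−1} (X − j) ∈ ℚ[X] (the falling factorial polynomial, with P = 1 for p = 0), one has ∑_{k=0}^{p} (coeff of X^k in P) · B_k = (−1)^p · p! / (p+1). -/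
/-!
Let `L` be the linear functional on `ℚ[X]` sending `X ^ k` to `B_k`. The recurrence
`∑_{k<n} C(n,k) B_k = [n = 1]` says exactly that `L (f (X + 1)) = L f + f'(0)`.
The falling factorial `P_p = X (X - 1) ⋯ (X - p + 1)` satisfies
`P_{p+1} (X + 1) = (X + 1) P_p = P_{p+1} + (p + 1) P_p`, hence
`(p + 1) L P_p = P_{p+1}'(0) = (-1)^p p!`.
-/

open Polynomial
open scoped Nat

section descPochhammer

variable {R : Type*} [CommRing R]

theorem prod_range_X_sub_C_eq_descPochhammer (n : ℕ) :
    ∏ j ∈ Finset.range n, (X - C (j : R)) = descPochhammer R n := by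
  induction n with
  | zero => simp
  | succ n ih => rw [Finset.prod_range_succ, ih, descPochhammer_succ_right, map_natCast]

theorem descPochhammer_succ_comp_X_add_one (n : ℕ) :
    (descPochhammer R (n + 1)).comp (X + 1) = (X + 1) * descPochhammer R n := by
  rw [descPochhammer_succ_left, mul_comp, X_comp, comp_assoc, sub_comp, X_comp, one_comp,
    add_sub_cancel_right, comp_X]

theorem descPochhammer_eval_neg_one (n : ℕ) :
    (descPochhammer R n).eval (-1) = (-1) ^ n * n ! := by
  have h := ascPochhammer_eval_neg_eq_descPochhammer R (-1) n
  rw [neg_neg, ascPochhammer_eval_one] at h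
  rw [h, ← mul_assoc, ← mul_pow, neg_one_mul, neg_neg, one_pow, one_mul]

theorem derivative_descPochhammer_succ_eval_zero (n : ℕ) :
    (derivative (descPochhammer R (n + 1))).eval 0 = (-1) ^ n * n ! := by
  rw [descPochhammer_succ_left, derivative_mul, eval_add, eval_mul, eval_mul, eval_X,
    derivative_X, eval_one, zero_mul, add_zero, one_mul, eval_comp, eval_sub, eval_X, eval_one,
    zero_sub, descPochhammer_eval_neg_one]

end descPochhammer

noncomputable def bernoulliUmbra : ℚ[X] →ₗ[ℚ] ℚ :=
  lsum fun k => LinearMap.id.smulRight (_root_.bernoulli k)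

theorem bernoulliUmbra_eq_sum_range {f : ℚ[X]} {n : ℕ} (hf : f.natDegree < n) :
    bernoulliUmbra f = ∑ k ∈ Finset.range n, f.coeff k * _root_.bernoulli k :=
  sum_over_range' f (by simp) n hf

theorem bernoulliUmbra_monomial (n : ℕ) (c : ℚ) :
    bernoulliUmbra (monomial n c) = c * _root_.bernoulli n := by
  simp [bernoulliUmbra]

theorem bernoulliUmbra_X_add_one_pow (n : ℕ) :
    bernoulliUmbra ((X + 1) ^ n) = _root_.bernoulli n + if n = 1 then 1 else 0 := by
  have hdeg : ((X + 1 : ℚ[X]) ^ n).natDegree < n + 1 := by compute_degree!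
  rw [bernoulliUmbra_eq_sum_range hdeg, Finset.sum_range_succ]
  simp only [coeff_X_add_one_pow, _root_.sum_bernoulli, Nat.choose_self, Nat.cast_one, one_mul]
  ring

theorem bernoulliUmbra_comp_X_add_one (f : ℚ[X]) :
    bernoulliUmbra (f.comp (X + 1)) = bernoulliUmbra f + f.derivative.eval 0 := by
  induction f using Polynomial.induction_on' with
  | add f g hf hg =>
    simp only [add_comp, map_add, eval_add, hf, hg]
    ring
  | monomial n c =>
    rw [monomial_comp, ← smul_eq_C_mul, map_smul, bernoulliUmbra_X_add_one_pow,
      bernoulliUmbra_monomial, derivative_monomial, eval_monomial, smul_eq_mul]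
    rcases n with _ | _ | n <;> simp [mul_add]

theorem succ_mul_bernoulliUmbra_descPochhammer (n : ℕ) :
    (n + 1) * bernoulliUmbra (descPochhammer ℚ n) = (-1) ^ n * n ! := by
  have hshift : (descPochhammer ℚ (n + 1)).comp (X + 1) =
      descPochhammer ℚ (n + 1) + (n + 1 : ℚ) • descPochhammer ℚ n := by
    rw [descPochhammer_succ_comp_X_add_one, descPochhammer_succ_right, smul_eq_C_mul]
    simp only [map_add, map_natCast, map_one]
    ring
  have h := bernoulliUmbra_comp_X_add_one (descPochhammer ℚ (n + 1))
  rw [hshift, derivative_descPochhammer_succ_eval_zero, map_add, map_smul, smul_eq_mul] at h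
  linarith

open Polynomial in
/-- Blissard's binomial identity `C(B, p) = (-1)^p/(p+1)` (convention `B_1 = -1/2`):
with the falling factorial polynomial `P(X) := ∏_{j=0}^{p-1} (X - j)`,
`∑_{k=0}^{p} (coeff of X^k in P) · B_k = (-1)^p · p! / (p+1)`. -/
theorem blissard_falling_factorial_bernoulli (p : ℕ) :
    ∑ k ∈ Finset.range (p + 1),
        ((∏ j ∈ Finset.range p, (X - C (j : ℚ))).coeff k) * _root_.bernoulli k
      = (-1 : ℚ) ^ p * (Nat.factorial p : ℚ) / (p + 1) := by
  have hdeg : (descPochhammer ℚ p).natDegree < p + 1 := by simp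
  rw [prod_range_X_sub_C_eq_descPochhammer, ← bernoulliUmbra_eq_sum_range hdeg,
    eq_div_iff (by positivity), mul_comm, succ_mul_bernoulliUmbra_descPochhammer]
end

section
/- Blissard's binomial identity C(B+p−1, p) = −1/(p(p+1)): for every natural number p ≥ 1, letting P(X) := ∏_{j=0}^{p−1} (X + j) ∈ ℚ[X] (the rising factorial polynomial), one has ∑_{k=0}^{p} (coeff of X^k in P) · B_k = −(p−1)! / (p+1). -/
open Polynomial Finset

noncomputable def Lb : ℚ[X] →ₗ[ℚ] ℚ :=
  Polynomial.lsum fun k => LinearMap.toSpanSingleton ℚ ℚ (_root_.bernoulli k)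

lemma Lb_apply (Q : ℚ[X]) : Lb Q = Q.sum fun k a => a * _root_.bernoulli k := by
  simp [Lb, Polynomial.lsum_apply, LinearMap.toSpanSingleton_apply, smul_eq_mul]

lemma Lb_eq_range (Q : ℚ[X]) (n : ℕ) (h : Q.natDegree < n) :
    Lb Q = ∑ k ∈ range n, Q.coeff k * _root_.bernoulli k := by
  rw [Lb_apply, Polynomial.sum_over_range' _ (by simp) n h]

lemma Lb_shift (Q : ℚ[X]) :
    Lb (Q.comp (X + 1)) = Lb Q + Q.derivative.eval 0 := by
  induction Q using Polynomial.induction_on' with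
  | add p q hp hq =>
    rw [add_comp, map_add, map_add, derivative_add, eval_add, hp, hq]; ring
  | monomial n c =>
    have h1 : (monomial n c : ℚ[X]) = C c * X ^ n := by
      rw [C_mul_X_pow_eq_monomial]
    have h2 : ((monomial n c : ℚ[X])).comp (X + 1) = C c * (X + 1) ^ n := by
      simp [h1, mul_comp]
    have hs : ∀ R : ℚ[X], Lb (C c * R) = c * Lb R := by
      intro R
      rw [← smul_eq_C_mul, map_smul, smul_eq_mul]
    have h1deg : (X + 1 : ℚ[X]).natDegree = 1 := by
      simpa using natDegree_X_add_C (1 : ℚ)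
    have hXn : Lb ((X + 1 : ℚ[X]) ^ n) = _root_.bernoulli n + (if n = 1 then (1:ℚ) else 0) := by
      rw [Lb_eq_range _ (n + 1) (by
        calc ((X + 1 : ℚ[X]) ^ n).natDegree ≤ n * (X + 1 : ℚ[X]).natDegree :=
          natDegree_pow_le
        _ = n := by rw [h1deg, mul_one]
        _ < n + 1 := Nat.lt_succ_self n)]
      simp only [coeff_X_add_one_pow]
      rw [Finset.sum_range_succ, _root_.sum_bernoulli]
      simp [add_comm]
    have hXn' : Lb ((X : ℚ[X]) ^ n) = _root_.bernoulli n := by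
      rw [Lb_eq_range _ (n + 1) (by simp)]
      simp [coeff_X_pow]
    rw [h2, hs, h1, hs, hXn, hXn', ← h1, derivative_monomial, eval_monomial]
    rcases eq_or_ne n 1 with h1' | h1'
    · subst h1'; norm_num; ring
    · simp only [h1', if_false, add_zero]
      rcases Nat.eq_zero_or_pos n with h0 | h0
      · subst h0; norm_num
      · rw [zero_pow (by omega : n - 1 ≠ 0)]; ring

open Polynomial in
/-- Blissard's binomial identity `C(B+p-1, p) = -1/(p(p+1))` (convention `B_1 = -1/2`):
for `p ≥ 1`, with the rising factorial polynomial `P(X) := ∏_{j=0}^{p-1} (X + j)`,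
`∑_{k=0}^{p} (coeff of X^k in P) · B_k = -(p-1)! / (p+1)`. -/
theorem blissard_rising_factorial_bernoulli (p : ℕ) (hp : 1 ≤ p) :
    ∑ k ∈ Finset.range (p + 1),
        ((∏ j ∈ Finset.range p, (X + C (j : ℚ))).coeff k) * _root_.bernoulli k
      = -(Nat.factorial (p - 1) : ℚ) / (p + 1) := by
  obtain ⟨m, rfl⟩ := Nat.exists_eq_add_of_le hp
  set P : ℚ[X] := ∏ j ∈ Finset.range (1 + m), (X + C (j : ℚ)) with hP
  have hPdeg : P.natDegree ≤ 1 + m := by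
    calc P.natDegree ≤ ∑ j ∈ range (1 + m), (X + C (j : ℚ)).natDegree :=
      natDegree_prod_le _ _
    _ ≤ ∑ j ∈ range (1 + m), 1 := by gcongr with j; exact (natDegree_X_add_C _).le
    _ = 1 + m := by simp
  -- the shifted product identity
  have key : ((X - 1) * P).comp (X + 1) = P * (X + C ((1 + m : ℕ) : ℚ)) := by
    rw [mul_comp, sub_comp, X_comp, one_comp]
    have hcomp : P.comp (X + 1) = ∏ j ∈ range (1 + m), (X + C ((j : ℚ) + 1)) := by
      rw [hP, Polynomial.prod_comp]
      refine Finset.prod_congr rfl fun j _ => ?_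
      simp [add_comp]; ring
    have h2 : P * (X + C ((1 + m : ℕ) : ℚ)) = ∏ j ∈ range (1 + m + 1), (X + C (j : ℚ)) := by
      rw [hP, Finset.prod_range_succ]
    have h3 : ∏ j ∈ range (1 + m + 1), (X + C (j : ℚ))
        = (∏ j ∈ range (1 + m), (X + C ((j : ℚ) + 1))) * X := by
      rw [Finset.prod_range_succ']
      simp
    rw [hcomp, h2, h3, add_sub_cancel_right, mul_comm]
  -- apply the shift functional equation
  have hshift := Lb_shift ((X - 1) * P)
  rw [key] at hshift
  -- derivative term
  have hPeval : P.eval 0 = 0 := by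
    rw [hP, eval_prod]
    refine Finset.prod_eq_zero (Finset.mem_range.2 (by omega : 0 < 1 + m)) ?_
    simp
  have hPsplit : P = (∏ j ∈ range m, (X + C ((j : ℚ) + 1))) * X := by
    rw [hP, add_comm 1 m, Finset.prod_range_succ']
    simp
  have hPder : P.derivative.eval 0 = (Nat.factorial m : ℚ) := by
    rw [hPsplit, derivative_mul, derivative_X, mul_one, eval_add, eval_mul, eval_X,
      mul_zero, zero_add, eval_prod]
    have : ∀ j ∈ range m, eval 0 (X + C ((j : ℚ) + 1)) = ((j + 1 : ℕ) : ℚ) := by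
      intro j _; simp
    rw [Finset.prod_congr rfl this, ← Nat.cast_prod, Finset.prod_range_add_one_eq_factorial]
  have hder : (((X - 1) * P).derivative).eval 0 = -(Nat.factorial m : ℚ) := by
    rw [derivative_mul, derivative_sub, derivative_X, derivative_one, sub_zero, one_mul,
      eval_add, eval_mul, eval_sub, eval_X, eval_one, hPeval, hPder]
    ring
  -- linearity computations
  have hL1 : Lb ((X - 1) * P) = Lb (X * P) - Lb P := by
    have : (X - 1) * P = X * P - P := by ring
    rw [this, map_sub]
  have hL2 : Lb (P * (X + C ((1 + m : ℕ) : ℚ))) = Lb (X * P) + ((1 + m : ℕ) : ℚ) * Lb P := by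
    have : P * (X + C ((1 + m : ℕ) : ℚ)) = X * P + ((1 + m : ℕ) : ℚ) • P := by
      rw [smul_eq_C_mul]; ring
    rw [this, map_add, map_smul, smul_eq_mul]
  rw [hL2, hL1, hder] at hshift
  have hLP : Lb P = -(Nat.factorial m : ℚ) / ((1 + m : ℕ) + 1 : ℚ) := by
    have hne : ((1 + m : ℕ) + 1 : ℚ) ≠ 0 := by positivity
    field_simp
    push_cast at hshift ⊢
    linarith
  have hfin : Lb P = ∑ k ∈ Finset.range (1 + m + 1), P.coeff k * _root_.bernoulli k :=
    Lb_eq_range P (1 + m + 1) (by omega)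
  rw [← hfin, hLP]
  norm_num
end

section
/- Blissard's direct formula for the Bernoulli numbers via finite differences: for every natural number n, (−1)^n · B_n = ∑_{k=0}^{n} (1/(k+1)) · ∑_{j=0}^{k} (−1)^j · C(k, j) · (j+1)^n. -/
open Finset

/-- `k`-th signed finite difference of `x ↦ (x+1)^m` (up to sign). -/
private def AA (k m : ℕ) : ℚ :=
  ∑ j ∈ Finset.range (k + 1), (-1 : ℚ) ^ j * (Nat.choose k j : ℚ) * ((j : ℚ) + 1) ^ m

/-- The shifted companion sum. -/
private def BB (k m : ℕ) : ℚ :=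
  ∑ j ∈ Finset.range (k + 1), (-1 : ℚ) ^ j * (Nat.choose k j : ℚ) * ((j : ℚ) + 2) ^ m

private lemma AA_zero (m : ℕ) : AA 0 m = 1 := by simp [AA]

private lemma pascal (k m : ℕ) : AA (k+1) m = AA k m - BB k m := by
  have e1 : AA (k+1) m = (∑ j ∈ range (k+1),
      ((-1:ℚ)^(j+1) * (Nat.choose k j : ℚ) * ((j:ℚ)+2)^m
        + (-1:ℚ)^(j+1) * (Nat.choose k (j+1) : ℚ) * ((j:ℚ)+2)^m)) + 1 := by
    rw [AA, Finset.sum_range_succ']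
    congr 1
    · refine Finset.sum_congr rfl fun j _ => ?_
      rw [Nat.choose_succ_succ]
      push_cast
      ring
    · simp
  have e2 : AA k m = (∑ j ∈ range (k+1),
      (-1:ℚ)^(j+1) * (Nat.choose k (j+1) : ℚ) * ((j:ℚ)+2)^m) + 1 := by
    rw [AA, Finset.sum_range_succ',
      Finset.sum_range_succ (fun j => (-1:ℚ)^(j+1) * (Nat.choose k (j+1) : ℚ) * ((j:ℚ)+2)^m)]
    simp only [Nat.choose_succ_self, Nat.cast_zero, mul_zero, zero_mul, add_zero]
    congr 1
    · refine Finset.sum_congr rfl fun j _ => ?_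
      push_cast
      ring
    · simp
  rw [e1, Finset.sum_add_distrib, e2, BB]
  have : ∑ j ∈ range (k+1), (-1:ℚ)^(j+1) * (Nat.choose k j : ℚ) * ((j:ℚ)+2)^m
      = -∑ j ∈ range (k+1), (-1:ℚ)^j * (Nat.choose k j : ℚ) * ((j:ℚ)+2)^m := by
    rw [← Finset.sum_neg_distrib]
    refine Finset.sum_congr rfl fun j _ => by ring
  rw [this]
  ring

private lemma AA_rec (k m : ℕ) : AA (k+1) (m+1) = AA (k+1) m - ((k:ℚ)+1) * BB k m := by
  have e1 : AA (k+1) (m+1) = AA (k+1) m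
      + ∑ j ∈ range (k+2), (-1:ℚ)^j * ((j:ℚ) * (Nat.choose (k+1) j : ℚ)) * ((j:ℚ)+1)^m := by
    rw [AA, AA, ← Finset.sum_add_distrib]
    refine Finset.sum_congr rfl fun j _ => by ring
  have e2 : ∑ j ∈ range (k+2), (-1:ℚ)^j * ((j:ℚ) * (Nat.choose (k+1) j : ℚ)) * ((j:ℚ)+1)^m
      = -(((k:ℚ)+1) * BB k m) := by
    rw [Finset.sum_range_succ']
    have hc : ∀ j : ℕ, (((j:ℚ)+1) * (Nat.choose (k+1) (j+1) : ℚ)) = ((k:ℚ)+1) * (Nat.choose k j : ℚ) := by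
      intro j
      have h := Nat.add_one_mul_choose_eq k j
      have h' : ((k+1) * Nat.choose k j : ℚ) = ((Nat.choose (k+1) (j+1) * (j+1) : ℕ) : ℚ) := by
        exact_mod_cast congrArg (fun x : ℕ => (x : ℚ)) h
      push_cast at h'
      linarith
    have : ∀ j ∈ range (k+1), (-1:ℚ)^(j+1) * (((j+1 : ℕ):ℚ) * (Nat.choose (k+1) (j+1) : ℚ)) * (((j+1:ℕ):ℚ)+1)^m
        = -(((k:ℚ)+1) * ((-1:ℚ)^j * (Nat.choose k j : ℚ) * ((j:ℚ)+2)^m)) := by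
      intro j _
      push_cast
      rw [show ((j:ℚ)+1+1) = ((j:ℚ)+2) by ring]
      have := hc j
      push_cast at this
      calc (-1:ℚ)^(j+1) * (((j:ℚ)+1) * (Nat.choose (k+1) (j+1) : ℚ)) * ((j:ℚ)+2)^m
          = (-1:ℚ)^(j+1) * (((k:ℚ)+1) * (Nat.choose k j : ℚ)) * ((j:ℚ)+2)^m := by rw [this]
        _ = -(((k:ℚ)+1) * ((-1:ℚ)^j * (Nat.choose k j : ℚ) * ((j:ℚ)+2)^m)) := by ring
    rw [Finset.sum_congr rfl this]
    simp only [Nat.cast_zero, zero_mul, mul_zero, pow_zero, one_mul, zero_add]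
    rw [Finset.sum_neg_distrib, ← Finset.mul_sum]
    simp [BB]
  rw [e1, e2]
  ring

private lemma AA_rec' (k m : ℕ) :
    AA (k+1) (m+1) = ((k:ℚ)+2) * AA (k+1) m - ((k:ℚ)+1) * AA k m := by
  have h3 := AA_rec k m
  have h4 := pascal k m
  have hB : BB k m = AA k m - AA (k+1) m := by linarith
  rw [h3, hB]; ring

private lemma AA_succ_zero (k : ℕ) : AA (k+1) 0 = 0 := by
  have h := Int.alternating_sum_range_choose_of_ne (n := k+1) (Nat.succ_ne_zero k)
  have h' : ((∑ m ∈ range (k+2), ((-1:ℤ)^m * ((k+1).choose m : ℤ)) : ℤ) : ℚ) = 0 := by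
    rw [h]; norm_num
  push_cast at h'
  rw [AA]
  simpa using h'

private lemma AA_vanish : ∀ m k : ℕ, m ≤ k → AA (k+1) m = 0 := by
  intro m
  induction m with
  | zero => intro k _; exact AA_succ_zero k
  | succ m ih =>
    intro k hk
    obtain ⟨k', rfl⟩ : ∃ k', k = k' + 1 := ⟨k - 1, by omega⟩
    have h1 : AA (k'+1+1) m = 0 := ih (k'+1) (by omega)
    have h2 : AA (k'+1) m = 0 := ih k' (by omega)
    rw [AA_rec' (k'+1) m, h1, h2]
    ring

private lemma T_sum : ∀ n : ℕ, ∑ k ∈ range n, AA (k+1) n / ((k:ℚ)+1) = -(n:ℚ) := by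
  intro n
  induction n with
  | zero => simp
  | succ n ih =>
    have hterm : ∀ k : ℕ, AA (k+1) (n+1) / ((k:ℚ)+1)
        = AA (k+1) n / ((k:ℚ)+1) + (AA (k+1) n - AA k n) := by
      intro k
      rw [AA_rec' k n]
      have hk : ((k:ℚ)+1) ≠ 0 := by positivity
      field_simp
      ring
    calc ∑ k ∈ range (n+1), AA (k+1) (n+1) / ((k:ℚ)+1)
        = ∑ k ∈ range (n+1), (AA (k+1) n / ((k:ℚ)+1) + (AA (k+1) n - AA k n)) :=
          Finset.sum_congr rfl fun k _ => hterm k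
      _ = (∑ k ∈ range (n+1), AA (k+1) n / ((k:ℚ)+1))
            + ∑ k ∈ range (n+1), (AA (k+1) n - AA k n) := Finset.sum_add_distrib
      _ = -(((n+1 : ℕ):ℚ)) := by
          rw [Finset.sum_range_sub (fun k => AA k n)]
          rw [Finset.sum_range_succ, AA_vanish n n le_rfl, AA_zero, ih]
          push_cast
          ring
  
private lemma binom_sum (n : ℕ) (x : ℚ) :
    ∑ m ∈ range n, (Nat.choose n m : ℚ) * x^m = (x+1)^n - x^n := by
  have h := add_pow x 1 n
  rw [Finset.sum_range_succ] at h
  simp only [one_pow, mul_one, Nat.choose_self, Nat.cast_one, Nat.sub_self, pow_zero] at h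
  have e : ∑ m ∈ range n, (Nat.choose n m : ℚ) * x^m
      = ∑ m ∈ range n, x^m * (Nat.choose n m : ℚ) :=
    Finset.sum_congr rfl fun m _ => by ring
  rw [e]
  linarith [h]

private def RR (m : ℕ) : ℚ :=
  ∑ k ∈ Finset.range (m + 1), (1 / (k + 1 : ℚ)) *
          ∑ j ∈ Finset.range (k + 1),
            (-1 : ℚ) ^ j * (Nat.choose k j : ℚ) * ((j : ℚ) + 1) ^ m

private lemma RR_eq_AA (m : ℕ) : RR m = ∑ k ∈ range (m+1), (1 / ((k:ℚ) + 1)) * AA k m := rfl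

private lemma RR_extend {m n : ℕ} (h : m < n) :
    RR m = ∑ k ∈ range n, (1 / ((k:ℚ) + 1)) * AA k m := by
  rw [RR_eq_AA]
  refine Finset.sum_subset (by intro x hx; simp at hx ⊢; omega) ?_
  intro k hk hk'
  simp only [mem_range] at hk hk'
  obtain ⟨k', rfl⟩ : ∃ k'', k = k'' + 1 := ⟨k - 1, by omega⟩
  rw [AA_vanish m k' (by omega)]
  ring

private lemma innerAA (k n : ℕ) :
    ∑ m ∈ range (n+1), (Nat.choose (n+1) m : ℚ) * AA k m = -(AA (k+1) (n+1)) := by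
  have e1 : ∑ m ∈ range (n+1), (Nat.choose (n+1) m : ℚ) * AA k m
      = ∑ j ∈ range (k+1), (-1:ℚ)^j * (Nat.choose k j : ℚ) *
          (∑ m ∈ range (n+1), (Nat.choose (n+1) m : ℚ) * ((j:ℚ)+1)^m) := by
    simp only [AA, Finset.mul_sum]
    rw [Finset.sum_comm]
    refine Finset.sum_congr rfl fun j _ => ?_
    refine Finset.sum_congr rfl fun m _ => by ring
  rw [e1]
  have e2 : ∀ j ∈ range (k+1), (-1:ℚ)^j * (Nat.choose k j : ℚ) *
        (∑ m ∈ range (n+1), (Nat.choose (n+1) m : ℚ) * ((j:ℚ)+1)^m)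
      = (-1:ℚ)^j * (Nat.choose k j : ℚ) * ((j:ℚ)+2)^(n+1)
        - (-1:ℚ)^j * (Nat.choose k j : ℚ) * ((j:ℚ)+1)^(n+1) := by
    intro j _
    rw [binom_sum (n+1) ((j:ℚ)+1)]
    ring_nf
  rw [Finset.sum_congr rfl e2, Finset.sum_sub_distrib]
  have := pascal k (n+1)
  rw [show (∑ j ∈ range (k+1), (-1:ℚ)^j * (Nat.choose k j : ℚ) * ((j:ℚ)+2)^(n+1)) = BB k (n+1) from rfl,
      show (∑ j ∈ range (k+1), (-1:ℚ)^j * (Nat.choose k j : ℚ) * ((j:ℚ)+1)^(n+1)) = AA k (n+1) from rfl]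
  linarith

private lemma S_lemma (n : ℕ) :
    ∑ m ∈ range (n+1), (Nat.choose (n+1) m : ℚ) * RR m = (n:ℚ)+1 := by
  have e1 : ∑ m ∈ range (n+1), (Nat.choose (n+1) m : ℚ) * RR m
      = ∑ m ∈ range (n+1), ∑ k ∈ range (n+1),
          (1 / ((k:ℚ) + 1)) * ((Nat.choose (n+1) m : ℚ) * AA k m) := by
    refine Finset.sum_congr rfl fun m hm => ?_
    rw [RR_extend (mem_range.mp hm), Finset.mul_sum]
    refine Finset.sum_congr rfl fun k _ => by ring
  rw [e1, Finset.sum_comm]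
  have e2 : ∀ k ∈ range (n+1), ∑ m ∈ range (n+1),
        (1 / ((k:ℚ) + 1)) * ((Nat.choose (n+1) m : ℚ) * AA k m)
      = -(AA (k+1) (n+1) / ((k:ℚ)+1)) := by
    intro k _
    rw [← Finset.mul_sum, innerAA k n]
    field_simp
  rw [Finset.sum_congr rfl e2, Finset.sum_neg_distrib, T_sum (n+1)]
  push_cast
  ring

private lemma RR_eq_bernoulli' : ∀ n : ℕ, RR n = bernoulli' n := by
  intro n
  induction n using Nat.strong_induction_on with
  | _ n ih =>
    have hS := S_lemma n
    have hB := sum_bernoulli' (n+1)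
    rw [Finset.sum_range_succ] at hS hB
    have heq : ∑ m ∈ range n, (Nat.choose (n+1) m : ℚ) * RR m
        = ∑ m ∈ range n, (Nat.choose (n+1) m : ℚ) * bernoulli' m :=
      Finset.sum_congr rfl fun m hm => by rw [ih m (mem_range.mp hm)]
    have hc : (Nat.choose (n+1) n : ℚ) ≠ 0 := by
      rw [Nat.choose_succ_self_right]
      exact_mod_cast Nat.succ_ne_zero n
    have hmul : (Nat.choose (n+1) n : ℚ) * RR n = (Nat.choose (n+1) n : ℚ) * bernoulli' n := by
      push_cast at hB
      linarith
    exact mul_left_cancel₀ hc hmul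

/-- Blissard's direct formula for the Bernoulli numbers via finite differences
(convention `B_1 = -1/2`):
`(-1)^n · B_n = ∑_{k=0}^{n} (1/(k+1)) · ∑_{j=0}^{k} (-1)^j · C(k, j) · (j+1)^n`. -/
theorem blissard_direct_formula (n : ℕ) :
    (-1 : ℚ) ^ n * bernoulli n
      = ∑ k ∈ Finset.range (n + 1), (1 / (k + 1 : ℚ)) *
          ∑ j ∈ Finset.range (k + 1),
            (-1 : ℚ) ^ j * (Nat.choose k j : ℚ) * ((j : ℚ) + 1) ^ n := by
  have h := RR_eq_bernoulli' n
  rw [bernoulli'_eq_bernoulli] at h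
  rw [← h]
  rfl
end

section
/- De Moivre's form of Bernoulli's rule: for every natural number m ≥ 1, ∑_{j=0}^{m−1} C(2m+1, 2j+1) · B_{2m−2j} = (2m−1)/2, i.e. C(2m+1,1)·B_{2m} + C(2m+1,3)·B_{2m−2} + … + C(2m+1,2m−1)·B_2 = (2m−1)/2. -/
private lemma pair_sum (g : ℕ → ℚ) (n : ℕ) :
    ∑ i ∈ Finset.range (2 * n), g i
      = ∑ j ∈ Finset.range n, (g (2 * j) + g (2 * j + 1)) := by
  induction n with
  | zero => simp
  | succ n ih =>
      rw [show 2 * (n + 1) = 2 * n + 1 + 1 by ring, Finset.sum_range_succ,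
        Finset.sum_range_succ, ih, Finset.sum_range_succ]
      ring

private lemma bernoulli_odd_zero {n : ℕ} (h : Odd n) (h1 : 1 < n) : bernoulli n = 0 := by
  rw [bernoulli_eq_bernoulli'_of_ne_one (by omega), bernoulli'_eq_zero_of_odd h h1]

private lemma even_sum (m : ℕ) (hm : 1 ≤ m) :
    ∑ j ∈ Finset.range m, ((2 * m + 1).choose (2 * j + 2) : ℚ) * bernoulli (2 * j + 2)
      = (2 * (m : ℚ) - 1) / 2 := by
  have h0 := sum_bernoulli (2 * m + 1)
  rw [if_neg (by omega)] at h0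
  rw [Finset.sum_range_succ'] at h0
  rw [pair_sum (fun i => ((2 * m + 1).choose (i + 1) : ℚ) * bernoulli (i + 1))] at h0
  simp only [Finset.sum_add_distrib] at h0
  have hodd : ∑ j ∈ Finset.range m,
      ((2 * m + 1).choose (2 * j + 1) : ℚ) * bernoulli (2 * j + 1)
      = -(2 * (m : ℚ) + 1) / 2 := by
    rw [Finset.sum_eq_single_of_mem 0 (Finset.mem_range.mpr (by omega))]
    · simp; ring
    · intro j _ hj
      rw [bernoulli_odd_zero ⟨j, by ring⟩ (by omega), mul_zero]
  simp only [Nat.choose_zero_right, Nat.cast_one, bernoulli_zero] at h0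
  rw [hodd] at h0
  linarith [h0]

/-- De Moivre's form of Bernoulli's rule: for `m ≥ 1`,
`∑_{j=0}^{m-1} C(2m+1, 2j+1) · B_{2m-2j} = (2m-1)/2`. -/
theorem de_moivre_bernoulli_rule (m : ℕ) (hm : 1 ≤ m) :
    ∑ j ∈ Finset.range m,
        (Nat.choose (2 * m + 1) (2 * j + 1) : ℚ) * bernoulli (2 * m - 2 * j)
      = (2 * (m : ℚ) - 1) / 2 := by
  rw [← Finset.sum_range_reflect]
  rw [← even_sum m hm]
  apply Finset.sum_congr rfl
  intro j hj
  rw [Finset.mem_range] at hj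
  have h1 : 2 * (m - 1 - j) + 1 = 2 * m + 1 - (2 * j + 2) := by omega
  have h2 : 2 * m - 2 * (m - 1 - j) = 2 * j + 2 := by omega
  rw [h1, h2, Nat.choose_symm (by omega)]
end

section
/- For every natural number p ≥ 1, the polynomial ∑_{k=0}^{p} C(p+1, k) · B'_k · X^{p+1−k} ∈ ℚ[X] (which represents (p+1)·∑_{k=1}^{n} k^p) is divisible by X·(X+1) in ℚ[X]. -/
/-!
Every term of the sum carries a positive power of `X`, so `X` divides it. At `X = -1` the term
of index `k` becomes `(-1)^(p+1) · C(p+1, k) · B_k`, since `B'_k = (-1)^k B_k`; the sum is then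
`(-1)^(p+1)` times the Bernoulli recurrence `∑_{k ≤ p} C(p+1, k) B_k = 0`, valid for `p ≥ 1`.
As `X` and `X + 1` are coprime, their product divides the sum.
-/

open Polynomial

noncomputable def faulhaberPoly (p : ℕ) : ℚ[X] :=
  ∑ k ∈ Finset.range (p + 1), C ((Nat.choose (p + 1) k : ℚ) * bernoulli' k) * X ^ (p + 1 - k)

theorem X_dvd_faulhaberPoly (p : ℕ) : X ∣ faulhaberPoly p :=
  Finset.dvd_sum fun k hk =>
    (dvd_pow_self X (by have := Finset.mem_range.mp hk; omega)).mul_left _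

theorem eval_neg_one_faulhaberPoly (p : ℕ) :
    (faulhaberPoly p).eval (-1) =
      (-1) ^ (p + 1) * ∑ k ∈ Finset.range (p + 1), ((p + 1).choose k : ℚ) * _root_.bernoulli k := by
  simp only [faulhaberPoly, eval_finsetSum, eval_mul, eval_C, eval_pow, eval_X, Finset.mul_sum]
  refine Finset.sum_congr rfl fun k hk => ?_
  have hsign : (-1 : ℚ) ^ (p + 1) = (-1) ^ (p + 1 - k) * (-1) ^ k := by
    rw [← pow_add, Nat.sub_add_cancel (Finset.mem_range.mp hk).le]
  rw [bernoulli'_eq_bernoulli, hsign]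
  ring

theorem faulhaberPoly_isRoot_neg_one {p : ℕ} (hp : 1 ≤ p) : (faulhaberPoly p).IsRoot (-1) := by
  rw [IsRoot, eval_neg_one_faulhaberPoly, _root_.sum_bernoulli, if_neg (by omega), mul_zero]

theorem X_mul_X_add_one_dvd_faulhaberPoly {p : ℕ} (hp : 1 ≤ p) :
    X * (X + 1) ∣ faulhaberPoly p := by
  have hcoprime : IsCoprime (X : ℚ[X]) (X + 1) := ⟨-1, 1, by ring⟩
  have hX_add_one : (X + 1 : ℚ[X]) = X - C (-1) := by simp
  refine hcoprime.mul_dvd (X_dvd_faulhaberPoly p) ?_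
  rw [hX_add_one, dvd_iff_isRoot]
  exact faulhaberPoly_isRoot_neg_one hp

open Polynomial in
/-- For `p ≥ 1`, the polynomial `∑_{k=0}^{p} C(p+1, k) · B'_k · X^{p+1-k}`
(representing `(p+1)·∑_{k=1}^{n} k^p`, original convention `B'_1 = +1/2`)
is divisible by `X·(X+1)` in `ℚ[X]`. -/
theorem sum_of_powers_poly_divisible (p : ℕ) (hp : 1 ≤ p) :
    (X * (X + 1)) ∣
      ∑ k ∈ Finset.range (p + 1),
        C ((Nat.choose (p + 1) k : ℚ) * bernoulli' k) * X ^ (p + 1 - k) :=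
  X_mul_X_add_one_dvd_faulhaberPoly hp
end

section
/- Euler's quadratic convolution recurrence for even-indexed Bernoulli numbers: for every natural number n ≥ 2, (2n+1) · B_{2n} = − ∑_{k=1}^{n−1} C(2n, 2k) · B_{2k} · B_{2n−2k}. -/
/-!
The generating function `B(t) = t / (eᵗ - 1)` of the Bernoulli numbers satisfies the Riccati
equation `B² = (1 - t) B - t B'`, obtained by differentiating `B (eᵗ - 1) = t`. Comparing the
coefficients of `tᵐ / m!` gives `∑ₖ C(m, k) Bₖ Bₘ₋ₖ = (1 - m) Bₘ - m Bₘ₋₁`. For `m = 2n` with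
`n ≥ 2` every term with an odd index vanishes, and the two extreme terms `k = 0, 2n` each
contribute `B₂ₙ`.
-/

open Finset Nat PowerSeries

theorem coeff_mk_div_factorial_mul_mk_div_factorial {K : Type*} [Field K] [CharZero K]
    (a b : ℕ → K) (m : ℕ) :
    coeff m (mk (fun k ↦ a k / k !) * mk (fun k ↦ b k / k !)) =
      (∑ k ∈ range (m + 1), (m.choose k : K) * a k * b (m - k)) / m ! := by
  rw [coeff_mul, Nat.sum_antidiagonal_eq_sum_range_succ_mk, sum_div]
  refine sum_congr rfl fun k hk ↦ ?_
  rw [Nat.cast_choose K (Nat.lt_succ_iff.mp (mem_range.mp hk)), coeff_mk, coeff_mk]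
  have : (m ! : K) ≠ 0 := Nat.cast_ne_zero.mpr m.factorial_ne_zero
  field_simp

theorem bernoulliPowerSeries_sq :
    bernoulliPowerSeries ℚ ^ 2 =
      (1 - X) * bernoulliPowerSeries ℚ - X * d⁄dX ℚ (bernoulliPowerSeries ℚ) := by
  set B := bernoulliPowerSeries ℚ
  have hB : B * (exp ℚ - 1) = X := bernoulliPowerSeries_mul_exp_sub_one ℚ
  have hB' : d⁄dX ℚ B * (exp ℚ - 1) + B * exp ℚ = 1 := by
    simpa [Derivation.leibniz, derivative_exp, add_comm, mul_comm] using congrArg (d⁄dX ℚ) hB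
  have hE : exp ℚ - 1 ≠ (0 : ℚ⟦X⟧) := fun h ↦ by simpa using congrArg (coeff 1) h
  refine mul_right_cancel₀ hE ?_
  linear_combination (B - 1) * hB + X * hB'

theorem sum_choose_mul_bernoulli_mul_bernoulli (m : ℕ) :
    ∑ k ∈ range (m + 1), (m.choose k : ℚ) * bernoulli k * bernoulli (m - k) =
      (1 - m) * bernoulli m - m * bernoulli (m - 1) := by
  rcases m with _ | m
  · simp
  have hB : bernoulliPowerSeries ℚ = mk fun n ↦ bernoulli n / n ! := by
    simp [bernoulliPowerSeries]
  have hm : ((m + 1)! : ℚ) ≠ 0 := Nat.cast_ne_zero.mpr (m + 1).factorial_ne_zero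
  have h := congrArg (coeff (m + 1)) bernoulliPowerSeries_sq
  rw [sq, hB, coeff_mk_div_factorial_mul_mk_div_factorial, sub_mul, one_mul, map_sub, map_sub,
    coeff_succ_X_mul, coeff_succ_X_mul, coeff_derivative, coeff_mk, coeff_mk, div_eq_iff hm] at h
  rw [h, Nat.factorial_succ]
  push_cast
  field_simp
  ring

theorem Finset.sum_range_two_mul_add_one_of_odd_eq_zero {M : Type*} [AddCommMonoid M]
    (f : ℕ → M) (hf : ∀ k, Odd k → f k = 0) (n : ℕ) :
    ∑ k ∈ range (2 * n + 1), f k = ∑ j ∈ range (n + 1), f (2 * j) := by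
  induction n with
  | zero => simp
  | succ n ih =>
    rw [show 2 * (n + 1) + 1 = 2 * n + 1 + 1 + 1 by ring, sum_range_succ, sum_range_succ, ih,
      hf _ ⟨n, rfl⟩, add_zero, sum_range_succ (fun j ↦ f (2 * j)) (n + 1)]
    rfl

theorem bernoulli_mul_bernoulli_eq_zero_of_odd {n k : ℕ} (hn : 2 ≤ n) (hk : Odd k) :
    bernoulli k * bernoulli (2 * n - k) = 0 := by
  obtain rfl | hk1 := eq_or_ne k 1
  · rw [bernoulli_eq_zero_of_odd (n := 2 * n - 1) ⟨n - 1, by omega⟩ (by omega), mul_zero]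
  · rw [bernoulli_eq_zero_of_odd hk (by obtain ⟨j, rfl⟩ := hk; omega), zero_mul]

/-- Euler's quadratic convolution recurrence for even-indexed Bernoulli numbers:
for `n ≥ 2`, `(2n+1) · B_{2n} = -∑_{k=1}^{n-1} C(2n, 2k) · B_{2k} · B_{2n-2k}`. -/
theorem euler_bernoulli_convolution (n : ℕ) (hn : 2 ≤ n) :
    (2 * (n : ℚ) + 1) * bernoulli (2 * n)
      = -∑ k ∈ Finset.Ico 1 n,
          (Nat.choose (2 * n) (2 * k) : ℚ) * bernoulli (2 * k) * bernoulli (2 * n - 2 * k) := by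
  have h := sum_choose_mul_bernoulli_mul_bernoulli (2 * n)
  rw [Finset.sum_range_two_mul_add_one_of_odd_eq_zero _
      (fun k hk ↦ by rw [mul_assoc, bernoulli_mul_bernoulli_eq_zero_of_odd hn hk, mul_zero]),
    sum_range_succ, range_eq_Ico, sum_eq_sum_Ico_succ_bot (by omega),
    bernoulli_eq_zero_of_odd (n := 2 * n - 1) ⟨n - 1, by omega⟩ (by omega)] at h
  simp only [Nat.mul_zero, Nat.choose_zero_right, bernoulli_zero, Nat.sub_zero, Nat.sub_self,
    Nat.choose_self] at h
  push_cast at h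
  linear_combination h
end

section
/- Genocchi's sum formula: for all natural numbers m and n with m ≥ n > 1, 2^m · (2^n − 1) · B_n = n · ∑_{k=2}^{m} C(m, k) · ∑_{j=1}^{k−1} (−1)^{j−1} · j^{n−1}. -/
/-!
The Euler polynomial `E_s(x) = 2^(s+1)/(s+1) · (B_{s+1}((x+1)/2) - B_{s+1}(x/2))` satisfies
`E_s(x+1) + E_s(x) = 2 x^s` because `B_n(y+1) - B_n(y) = n y^(n-1)`, so the alternating power sums
telescope: `2 ∑_{j=1}^{k-1} (-1)^(j-1) j^s = (-1)^k E_s(k) - E_s(0)`. Summed against `C(m,k)`, the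
terms `(-1)^k C(m,k) E_s(k)` cancel, being an `(m+1)`-st forward difference of the polynomial
`B_{s+1}(x/2)` of degree `s + 1 ≤ m`. What remains is `-2^(m-1) E_s(0)`, and
`E_s(0) = 2 (1 - 2^(s+1)) B_{s+1} / (s+1)` by `B_n(1/2) = (2^(1-n) - 1) B_n`.
-/

open Finset

section

open Polynomial

theorem Polynomial.natDegree_bernoulli_le (n : ℕ) : (Polynomial.bernoulli n).natDegree ≤ n :=
  natDegree_le_iff_coeff_eq_zero.mpr fun i hi => by
    simp [coeff_bernoulli, not_le.mpr hi]

theorem Polynomial.bernoulli_eval_half (k : ℕ) :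
    (Polynomial.bernoulli k).eval (2⁻¹ : ℚ) = (2 / 2 ^ k - 1) * _root_.bernoulli k := by
  have h := bernoulliFun_eval_half k
  rw [bernoulliFun, eval_map, ← Rat.cast_ofNat, ← Rat.cast_inv,
    ← eq_ratCast (algebraMap ℚ ℝ), eval₂_at_apply, eq_ratCast] at h
  exact_mod_cast h

theorem sum_choose_mul_neg_one_pow_mul_sub_eval_eq_zero {R : Type*} [CommRing R] (P : R[X])
    {m : ℕ} (hP : P.natDegree ≤ m) :
    ∑ k ∈ range (m + 1), (m.choose k : R) * (-1) ^ k * (P.eval ((k : R) + 1) - P.eval (k : R))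
      = 0 :=
  calc _ = (-1) ^ m * (fwdDiff 1)^[m + 1] P.eval 0 := by
        rw [Function.iterate_succ_apply, fwdDiff_iter_eq_sum_shift, mul_sum]
        refine sum_congr rfl fun k hk => ?_
        have hkm : k ≤ m := Nat.lt_succ_iff.mp (mem_range.mp hk)
        have hsign : (-1 : R) ^ k = (-1) ^ m * (-1) ^ (m - k) := by
          rw [← pow_add, show m + (m - k) = k + 2 * (m - k) by omega, pow_add, pow_mul]
          simp
        simp only [hsign, fwdDiff, zero_add, nsmul_eq_mul, mul_one, zsmul_eq_mul, Int.cast_mul,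
          Int.cast_pow, Int.cast_neg, Int.cast_one, Int.cast_natCast]
        ring
    _ = 0 := by
        rw [fwdDiff_iter_eq_zero_of_degree_lt (Nat.lt_succ_of_le hP), Pi.zero_apply, mul_zero]

noncomputable def eulerFun (s : ℕ) (x : ℚ) : ℚ :=
  2 ^ (s + 1) / (s + 1) *
    ((Polynomial.bernoulli (s + 1)).eval ((x + 1) / 2) -
      (Polynomial.bernoulli (s + 1)).eval (x / 2))

theorem eulerFun_add_one_add (s : ℕ) (x : ℚ) :
    eulerFun s (x + 1) + eulerFun s x = 2 * x ^ s := by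
  rw [eulerFun, eulerFun, show (x + 1 + 1) / 2 = 1 + x / 2 by ring, bernoulli_eval_one_add,
    Nat.add_sub_cancel, div_pow]
  push_cast
  field_simp
  ring

theorem eulerFun_eval_zero (s : ℕ) :
    eulerFun s 0 = 2 * (1 - 2 ^ (s + 1)) * _root_.bernoulli (s + 1) / (s + 1) := by
  rw [eulerFun, zero_add, zero_div, one_div, bernoulli_eval_half, bernoulli_eval_zero]
  field_simp
  ring

theorem eulerFun_eq_sub_eval (s : ℕ) (x : ℚ) :
    eulerFun s x = 2 ^ (s + 1) / (s + 1) *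
      (((Polynomial.bernoulli (s + 1)).comp (C 2⁻¹ * X)).eval (x + 1) -
        ((Polynomial.bernoulli (s + 1)).comp (C 2⁻¹ * X)).eval x) := by
  simp only [eulerFun, eval_comp, eval_mul, eval_C, eval_X]
  ring_nf

theorem sum_choose_mul_neg_one_pow_mul_eulerFun {s m : ℕ} (hsm : s < m) :
    ∑ k ∈ range (m + 1), (m.choose k : ℚ) * (-1) ^ k * eulerFun s k = 0 := by
  have hdeg : ((Polynomial.bernoulli (s + 1)).comp (C 2⁻¹ * X)).natDegree ≤ m := by
    rw [natDegree_comp, natDegree_C_mul_X _ (by norm_num), mul_one]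
    exact (natDegree_bernoulli_le _).trans hsm
  simp_rw [eulerFun_eq_sub_eval, mul_left_comm _ (2 ^ (s + 1) / ((s : ℚ) + 1)), ← mul_sum,
    sum_choose_mul_neg_one_pow_mul_sub_eval_eq_zero _ hdeg, mul_zero]

end

def alternatingPowerSum (s k : ℕ) : ℚ :=
  ∑ j ∈ Ico 1 k, (-1) ^ (j - 1) * (j : ℚ) ^ s

theorem two_mul_alternatingPowerSum {s : ℕ} (hs : s ≠ 0) (k : ℕ) :
    2 * alternatingPowerSum s k = (-1) ^ k * eulerFun s k - eulerFun s 0 := by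
  have hterm (j : ℕ) : (-1 : ℚ) ^ (j + 1) * eulerFun s ↑(j + 1) - (-1) ^ j * eulerFun s j
      = 2 * ((-1) ^ (j - 1) * (j : ℚ) ^ s) := by
    rw [Nat.cast_succ, pow_succ, mul_neg_one, neg_mul, ← neg_add', ← mul_add,
      eulerFun_add_one_add]
    rcases j with _ | j
    · simp [hs]
    · rw [Nat.add_sub_cancel, pow_succ]
      ring
  have hrange :
      alternatingPowerSum s k = ∑ j ∈ range k, (-1 : ℚ) ^ (j - 1) * (j : ℚ) ^ s := by
    refine sum_subset (fun j hj => ?_) fun j hj hj' => ?_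
    · rw [mem_Ico] at hj
      exact mem_range.mpr hj.2
    · obtain rfl : j = 0 := by rw [mem_Ico] at hj'; rw [mem_range] at hj; omega
      simp [hs]
  rw [hrange, mul_sum, ← sum_congr rfl fun j _ => hterm j,
    sum_range_sub (fun j => (-1 : ℚ) ^ j * eulerFun s j)]
  simp

theorem sum_choose_mul_alternatingPowerSum {s m : ℕ} (hs : s ≠ 0) (hsm : s < m) :
    ∑ k ∈ range (m + 1), (m.choose k : ℚ) * alternatingPowerSum s k
      = -2 ^ m * eulerFun s 0 / 2 := by
  have hsplit (k : ℕ) : (m.choose k : ℚ) * alternatingPowerSum s k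
      = ((m.choose k : ℚ) * (-1) ^ k * eulerFun s k - m.choose k * eulerFun s 0) / 2 := by
    linear_combination (m.choose k : ℚ) / 2 * two_mul_alternatingPowerSum hs k
  have hchoose : ∑ k ∈ range (m + 1), (m.choose k : ℚ) = 2 ^ m := by
    exact_mod_cast Nat.sum_range_choose m
  simp_rw [hsplit, ← sum_div, sum_sub_distrib, ← sum_mul,
    sum_choose_mul_neg_one_pow_mul_eulerFun hsm, hchoose]
  ring

theorem sum_Icc_two_choose_mul_alternatingPowerSum (s m : ℕ) :
    ∑ k ∈ Icc 2 m, (m.choose k : ℚ) * alternatingPowerSum s k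
      = ∑ k ∈ range (m + 1), (m.choose k : ℚ) * alternatingPowerSum s k := by
  refine sum_subset (fun k hk => ?_) fun k hk hk' => ?_
  · rw [mem_Icc] at hk
    exact mem_range.mpr (Nat.lt_succ_of_le hk.2)
  · rw [mem_Icc] at hk'
    rw [mem_range] at hk
    rw [alternatingPowerSum, Ico_eq_empty_of_le (by omega), sum_empty, mul_zero]

/-- Genocchi's sum formula: for `m ≥ n > 1`,
`2^m · (2^n - 1) · B_n = n · ∑_{k=2}^{m} C(m, k) · ∑_{j=1}^{k-1} (-1)^{j-1} · j^{n-1}`. -/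
theorem genocchi_sum_formula (m n : ℕ) (hmn : n ≤ m) (hn : 1 < n) :
    (2 : ℚ) ^ m * ((2 : ℚ) ^ n - 1) * bernoulli n
      = (n : ℚ) * ∑ k ∈ Finset.Icc 2 m, (Nat.choose m k : ℚ) *
          ∑ j ∈ Finset.Ico 1 k, (-1 : ℚ) ^ (j - 1) * (j : ℚ) ^ (n - 1) := by
  obtain ⟨s, rfl⟩ : ∃ s, n = s + 1 := ⟨n - 1, by omega⟩
  rw [Nat.add_sub_cancel]
  change _ = _ * ∑ k ∈ Icc 2 m, (m.choose k : ℚ) * alternatingPowerSum s k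
  rw [sum_Icc_two_choose_mul_alternatingPowerSum,
    sum_choose_mul_alternatingPowerSum (by omega) (by omega), eulerFun_eval_zero]
  push_cast
  field_simp
  ring
end
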